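/- Let P be a flow-based polytope whose edge set E is connected when viewed as a set of undirected edges, and suppose there exists x ∈ P with x_e ∈ (0,1) for all e ∈ E. Then there exist a vertex f of P, a directed tree T with all edges in E, and a root r ∈ [n] such that Flip_f(T) is an arborescence rooted at r. -/

import Mathlib

open Finset

open scoped Classical

/-- The set `E₀` of non-loop directed edges on vertex set `Fin n`. -/
def E0 (n : ℕ) : Finset (Fin n × Fin n) :=
  Finset.univ.filter (fun e => e.1 ≠ e.2)

/-- The reverse of a directed edge. -/
def rev {n : ℕ} (e : Fin n × Fin n) : Fin n × Fin n := (e.2, e.1)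

/-- The underlying undirected (simple) graph of a set of directed edges. -/
def undirGraph (n : ℕ) (D : Finset (Fin n × Fin n)) : SimpleGraph (Fin n) where
  Adj u v := u ≠ v ∧ ((u, v) ∈ D ∨ (v, u) ∈ D)
  symm := ⟨fun u v h => ⟨h.1.symm, h.2.symm⟩⟩
  loopless := ⟨fun u h => h.1 rfl⟩

/-- There is a directed walk from `i` to `j` using only edges in `D`. -/
def reachesIn (n : ℕ) (D : Finset (Fin n × Fin n)) (i j : Fin n) : Prop :=
  Relation.ReflTransGen (fun a b => (a, b) ∈ D) i j

/-- `T` is a directed tree: `n-1` non-loop directed edges whose underlying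
undirected edges form a spanning tree of `Fin n`. -/
def IsDirTree (n : ℕ) (T : Finset (Fin n × Fin n)) : Prop :=
  T ⊆ E0 n ∧ T.card = n - 1 ∧ (undirGraph n T).Connected

/-- `A` is an arborescence rooted at `r`: a directed tree such that from every
vertex there is a directed walk to `r` using only edges of `A`. -/
def IsArb (n : ℕ) (r : Fin n) (A : Finset (Fin n × Fin n)) : Prop :=
  IsDirTree n A ∧ ∀ v : Fin n, reachesIn n A v r

/-- `Flip_f` of a single edge: reverse the edge iff `f e = 1`. -/
noncomputable def flipEdge (n : ℕ) (f : Fin n × Fin n → ℝ) (e : Fin n × Fin n) :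
    Fin n × Fin n :=
  if f e = 1 then rev e else e

/-- `Flip_f` of a set of edges. -/
noncomputable def flipSet (n : ℕ) (f : Fin n × Fin n → ℝ)
    (T : Finset (Fin n × Fin n)) : Finset (Fin n × Fin n) :=
  T.image (flipEdge n f)

/-- Membership in the flow-based polytope with variable edge set `E` and
demands `d` (points are extended by zero outside `E`). -/
def memFlowPolytope (n : ℕ) (E : Finset (Fin n × Fin n)) (d : Fin n → ℤ)
    (x : Fin n × Fin n → ℝ) : Prop :=
  (∀ e, e ∉ E → x e = 0) ∧ (∀ e ∈ E, x e ∈ Set.Icc (0 : ℝ) 1) ∧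
    ∀ v : Fin n, (∑ i, x (v, i)) - (∑ i, x (i, v)) = (d v : ℝ)

/-- A vertex of the flow-based polytope: a 0/1 point of the polytope. -/
def IsVertex (n : ℕ) (E : Finset (Fin n × Fin n)) (d : Fin n → ℤ)
    (f : Fin n × Fin n → ℝ) : Prop :=
  memFlowPolytope n E d f ∧ ∀ e ∈ E, f e = 0 ∨ f e = 1

/-- The 0/1 indicator of a set of edges. -/
def ind (n : ℕ) (S : Finset (Fin n × Fin n)) : Fin n × Fin n → ℝ :=
  fun e => if e ∈ S then 1 else 0

/-- The vertices of the flow-based polytope, encoded by their supports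
(sets of edges carrying flow `1`). -/
noncomputable def flowVertices (n : ℕ) (E : Finset (Fin n × Fin n)) (d : Fin n → ℤ) :
    Finset (Finset (Fin n × Fin n)) :=
  Finset.univ.filter (fun S => S ⊆ E ∧ memFlowPolytope n E d (ind n S))

/-- The polynomial `P_{f,r}(x)` of the Bernoulli factory. Since `f` is 0/1,
`x_e^{f_e}(1-x_e)^{1-f_e}` is `x_e` if `f_e = 1` and `1 - x_e` otherwise, and
`x_e^{1-f_e}(1-x_e)^{f_e}` is `1 - x_e` if `f_e = 1` and `x_e` otherwise. -/
noncomputable def Pfr (n : ℕ) (E : Finset (Fin n × Fin n))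
    (f : Fin n × Fin n → ℝ) (r : Fin n) (x : Fin n × Fin n → ℝ) : ℝ :=
  (∏ e ∈ E, if f e = 1 then x e else 1 - x e) *
    ∑ T ∈ Finset.univ.filter
        (fun T : Finset (Fin n × Fin n) =>
          IsDirTree n T ∧ T ⊆ E ∧ IsArb n r (flipSet n f T)),
      ∏ e ∈ T, (if f e = 1 then 1 - x e else x e)

/-- Membership in the circulation hyperplane `Circ̄`. -/
def memCircBar (n : ℕ) (y : Fin n × Fin n → ℝ) : Prop :=
  ∀ v : Fin n,
    (∑ i ∈ Finset.univ.filter (fun i => i ≠ v), y (v, i)) -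
      (∑ i ∈ Finset.univ.filter (fun i => i ≠ v), y (i, v)) = 0

/-- The arborescence-generating polynomial `SArb_r(y)`. -/
noncomputable def SArb (n : ℕ) (r : Fin n) (y : Fin n × Fin n → ℝ) : ℝ :=
  ∑ A ∈ Finset.univ.filter (fun A : Finset (Fin n × Fin n) => IsArb n r A),
    ∏ e ∈ A, y e

/-- The map `M_f`: `M_f(x)_e = x_e (1 - f_e) + (1 - x_ē) f_ē`. -/
def Mf (n : ℕ) (f x : Fin n × Fin n → ℝ) : Fin n × Fin n → ℝ :=
  fun e => x e * (1 - f e) + (1 - x (rev e)) * f (rev e)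

/-!
Cycle cancelling makes the polytope integral. With integer demands, no vertex of `[n]` meets
exactly one edge of fractional value, so the fractional edges have at least as many edges as
endpoints and hence support a nonzero circulation; pushing along it until some edge becomes
integral reduces the number of fractional edges.

For a vertex `f` and the interior point `x`, `y = M_f(x)` is a nonnegative circulation whose
support is exactly `Flip_f(E)`. In the support of a nonnegative circulation every edge closes up
into a directed cycle (no flow can leave a set that none enters), so, `E` being connected,
`Flip_f(E)` is strongly connected. An in-tree of `Flip_f(E)` spanning towards any root `r` is an
arborescence, and pulling it back through `Flip_f` gives `T`.
-/

def netFlow (n : ℕ) : (Fin n × Fin n → ℝ) →ₗ[ℝ] Fin n → ℝ where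
  toFun g v := ∑ i, g (v, i) - ∑ i, g (i, v)
  map_add' g h := by ext v; simp only [Pi.add_apply, sum_add_distrib]; ring
  map_smul' c g := by
    ext v
    simp only [Pi.smul_apply, smul_eq_mul, ← mul_sum, RingHom.id_apply]
    ring

section

variable {n : ℕ}

lemma mem_E0_iff {e : Fin n × Fin n} : e ∈ E0 n ↔ e.1 ≠ e.2 := by
  simp [E0]

lemma netFlow_apply (g : Fin n × Fin n → ℝ) (v : Fin n) :
    netFlow n g v = ∑ i, g (v, i) - ∑ i, g (i, v) := rfl

def incidence (v : Fin n) (a : Fin n × Fin n) : ℤ :=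
  (if a.1 = v then 1 else 0) - if a.2 = v then 1 else 0

lemma netFlow_apply_eq_sum_incidence (g : Fin n × Fin n → ℝ) (v : Fin n) :
    netFlow n g v = ∑ a, incidence v a • g a := by
  simp only [netFlow_apply, incidence, sub_smul, ite_smul, one_smul, zero_smul, sum_sub_distrib,
    Fintype.sum_prod_type]
  congr 1 <;> symm
  · rw [Fintype.sum_eq_single v fun x hx => by simp [hx]]
    simp
  · simp

lemma sum_netFlow (g : Fin n × Fin n → ℝ) : ∑ v, netFlow n g v = 0 := by
  simp only [netFlow_apply, sum_sub_distrib]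
  rw [sum_comm, sub_self]

lemma netFlow_comp_rev (g : Fin n × Fin n → ℝ) : netFlow n (g ∘ rev) = -netFlow n g := by
  ext v
  simp [netFlow_apply, rev]

lemma sum_netFlow_eq_cut (g : Fin n × Fin n → ℝ) (R : Finset (Fin n)) :
    ∑ u ∈ R, netFlow n g u = ∑ u ∈ R, ∑ i ∈ Rᶜ, g (u, i) - ∑ u ∈ R, ∑ i ∈ Rᶜ, g (i, u) := by
  simp only [netFlow_apply, ← sum_add_sum_compl R, sum_sub_distrib, sum_add_distrib]
  rw [sum_comm (s := R) (t := R) (f := fun u i => g (i, u))]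
  ring

lemma mem_of_netFlow_mem {Z : AddSubgroup ℝ} {g : Fin n × Fin n → ℝ} {e : Fin n × Fin n}
    {v : Fin n} (he : e.1 ≠ e.2) (hv : e.1 = v ∨ e.2 = v) (hflow : netFlow n g v ∈ Z)
    (hother : ∀ a ≠ e, (a.1 = v ∨ a.2 = v) → g a ∈ Z) : g e ∈ Z := by
  have hrest : ∑ a ∈ univ.erase e, incidence v a • g a ∈ Z := by
    refine Z.sum_mem fun a ha => ?_
    by_cases hav : a.1 = v ∨ a.2 = v
    · exact Z.zsmul_mem (hother a (ne_of_mem_erase ha) hav) _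
    · simp [incidence, not_or.1 hav]
  rw [netFlow_apply_eq_sum_incidence, ← add_sum_erase _ _ (mem_univ e)] at hflow
  have hinc : incidence v e = 1 ∨ incidence v e = -1 := by
    rcases hv with rfl | rfl <;> simp [incidence, he, Ne.symm he]
  have := Z.sub_mem hflow hrest
  rw [add_sub_cancel_right] at this
  rcases hinc with h | h <;> simpa [h] using this

lemma card_endpoints_le {F : Finset (Fin n × Fin n)}
    (hdeg : ∀ e ∈ F, ∀ v, (e.1 = v ∨ e.2 = v) → ∃ e' ∈ F, e' ≠ e ∧ (e'.1 = v ∨ e'.2 = v)) :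
    #(F.image Prod.fst ∪ F.image Prod.snd) ≤ #F := by
  set V := F.image Prod.fst ∪ F.image Prod.snd
  have htwo : ∀ v ∈ V, 2 ≤ #{e ∈ F | e.1 = v ∨ e.2 = v} := by
    intro v hv
    obtain ⟨e, heF, hev⟩ : ∃ e ∈ F, e.1 = v ∨ e.2 = v := by
      simp only [V, mem_union, mem_image] at hv
      rcases hv with ⟨e, he, h⟩ | ⟨e, he, h⟩
      exacts [⟨e, he, .inl h⟩, ⟨e, he, .inr h⟩]
    obtain ⟨e', he'F, hne, he'v⟩ := hdeg e heF v hev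
    exact one_lt_card.2 ⟨e, mem_filter.2 ⟨heF, hev⟩, e', mem_filter.2 ⟨he'F, he'v⟩, hne.symm⟩
  have hmaps : ∀ p : Fin n × Fin n → Fin n, (F : Set _).MapsTo p (univ : Finset (Fin n)) :=
    fun _ _ _ => mem_univ _
  have := calc 2 * #V = ∑ v ∈ V, 2 := by rw [sum_const, smul_eq_mul, mul_comm]
    _ ≤ ∑ v ∈ V, #{e ∈ F | e.1 = v ∨ e.2 = v} := sum_le_sum htwo
    _ ≤ ∑ v, #{e ∈ F | e.1 = v ∨ e.2 = v} := sum_le_sum_of_subset (subset_univ V)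
    _ ≤ ∑ v, (#{e ∈ F | e.1 = v} + #{e ∈ F | e.2 = v}) :=
      sum_le_sum fun v _ => by rw [filter_or]; exact card_union_le _ _
    _ = 2 * #F := by
      rw [sum_add_distrib, ← card_eq_sum_card_fiberwise (hmaps _),
        ← card_eq_sum_card_fiberwise (hmaps _), two_mul]
  omega

lemma exists_circulation_supportedOn (F : Finset (Fin n × Fin n)) (hF : F.Nonempty)
    (hdeg : ∀ e ∈ F, ∀ v, (e.1 = v ∨ e.2 = v) → ∃ e' ∈ F, e' ≠ e ∧ (e'.1 = v ∨ e'.2 = v)) :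
    ∃ g : Fin n × Fin n → ℝ, (∀ a ∉ F, g a = 0) ∧ netFlow n g = 0 ∧ ∃ a ∈ F, g a ≠ 0 := by
  set V := F.image Prod.fst ∪ F.image Prod.snd
  obtain ⟨e₀, he₀⟩ := hF
  set W := V.erase e₀.1
  have hW : #W < #F := by
    rw [card_erase_of_mem (mem_union_left _ (mem_image_of_mem _ he₀))]
    have := card_endpoints_le hdeg
    have : 0 < #F := card_pos.2 ⟨e₀, he₀⟩
    omega
  -- the incidence vectors of `F` on the endpoints other than `e₀.1` outnumber their dimension;
  -- a dependence among them is a circulation since net flows always sum to zero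
  set col : Fin n × Fin n → W → ℝ := fun a w => incidence (w : Fin n) a
  have hdep : ¬ LinearIndepOn ℝ col F := fun h => by
    have := h.fintype_card_le_finrank
    simp only [coe_sort_coe, Fintype.card_coe, Module.finrank_fintype_fun_eq_card] at this
    omega
  obtain ⟨c, hc, a, haF, hca⟩ := not_linearIndepOn_finset_iff.1 hdep
  set g : Fin n × Fin n → ℝ := fun a => if a ∈ F then c a else 0
  have hflow : ∀ v, netFlow n g v = ∑ a ∈ F, c a * incidence v a := by
    intro v
    rw [netFlow_apply_eq_sum_incidence, ← sum_subset (subset_univ F)]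
    · exact sum_congr rfl fun a ha => by simp [g, ha, mul_comm]
    · intro a _ ha
      simp [g, ha]
  have hoff : ∀ v ≠ e₀.1, netFlow n g v = 0 := by
    intro v hv
    rw [hflow]
    by_cases hvV : v ∈ V
    · simpa [col, Finset.sum_apply] using congrFun hc ⟨v, mem_erase.2 ⟨hv, hvV⟩⟩
    · refine sum_eq_zero fun a ha => ?_
      have h1 : a.1 ≠ v := fun h => hvV (mem_union_left _ (mem_image.2 ⟨a, ha, h⟩))
      have h2 : a.2 ≠ v := fun h => hvV (mem_union_right _ (mem_image.2 ⟨a, ha, h⟩))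
      simp [incidence, h1, h2]
  refine ⟨g, fun a ha => if_neg ha, ?_, a, haF, by simpa [g, haF] using hca⟩
  ext v
  rcases eq_or_ne v e₀.1 with rfl | hv
  · rw [← sum_eq_single _ (fun v _ hv => hoff v hv) (fun h => (h (mem_univ _)).elim)]
    exact sum_netFlow g
  · exact hoff v hv

lemma exists_add_mul_mem_Icc_boundary {ι : Type*} (S : Finset ι) (x g : ι → ℝ)
    (hx : ∀ a ∈ S, x a ∈ Set.Icc 0 1) (hg : ∃ a ∈ S, g a ≠ 0) :
    ∃ t : ℝ, (∀ a ∈ S, x a + t * g a ∈ Set.Icc 0 1) ∧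
      ∃ a ∈ S, g a ≠ 0 ∧ (x a + t * g a = 0 ∨ x a + t * g a = 1) := by
  set P := S.filter (g · ≠ 0)
  have hP : P.Nonempty := by simpa [P, Finset.Nonempty] using hg
  -- `τ a` is the step at which coordinate `a` reaches the end of `[0, 1]` it is heading to
  set τ : ι → ℝ := fun a => ((if 0 < g a then 1 else 0) - x a) / g a
  have hτ : ∀ a ∈ P, 0 ≤ τ a ∧ x a + τ a * g a = if 0 < g a then 1 else 0 := by
    intro a ha
    obtain ⟨haS, hga⟩ := mem_filter.1 ha
    obtain ⟨h0, h1⟩ := hx a haS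
    refine ⟨?_, by simp only [τ, div_mul_cancel₀ _ hga]; ring⟩
    rcases lt_or_gt_of_ne hga with hneg | hpos
    · simp only [τ, if_neg hneg.not_gt]
      exact div_nonneg_of_nonpos (by linarith) hneg.le
    · simp only [τ, if_pos hpos]
      exact div_nonneg (by linarith) hpos.le
  obtain ⟨b, hbP, hb⟩ := exists_mem_eq_inf' hP τ
  refine ⟨P.inf' hP τ, fun a haS => ?_, b, (mem_filter.1 hbP).1, (mem_filter.1 hbP).2, ?_⟩
  · obtain ⟨h0, h1⟩ := hx a haS
    by_cases hga : g a = 0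
    · simpa [hga] using hx a haS
    have haP : a ∈ P := mem_filter.2 ⟨haS, hga⟩
    have ht0 : 0 ≤ P.inf' hP τ := (le_inf'_iff _ _).2 fun a ha => (hτ a ha).1
    have hta : P.inf' hP τ ≤ τ a := inf'_le _ haP
    have hend := (hτ a haP).2
    rcases lt_or_gt_of_ne hga with hneg | hpos
    · rw [if_neg hneg.not_gt] at hend
      constructor <;> nlinarith
    · rw [if_pos hpos] at hend
      constructor <;> nlinarith
  · rw [hb, (hτ b hbP).2]
    split_ifs <;> simp

lemma eq_zero_or_eq_one_of_mem_Icc {t : ℝ} (h : t ∈ Set.Icc 0 1) (h' : t ∉ Set.Ioo 0 1) :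
    t = 0 ∨ t = 1 := by
  have : t ∈ Set.Icc 0 1 \ Set.Ioo 0 1 := ⟨h, h'⟩
  rw [Set.Icc_sdiff_Ioo_same zero_le_one] at this
  simpa using this

section Polytope

variable {E : Finset (Fin n × Fin n)} {d : Fin n → ℤ} {x : Fin n × Fin n → ℝ}

noncomputable def fractionalEdges (E : Finset (Fin n × Fin n)) (x : Fin n × Fin n → ℝ) :
    Finset (Fin n × Fin n) :=
  E.filter fun a => x a ∈ Set.Ioo 0 1

lemma exists_ne_mem_fractionalEdges (hE : E ⊆ E0 n) (hx : memFlowPolytope n E d x)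
    {e : Fin n × Fin n} (he : e ∈ fractionalEdges E x) {v : Fin n} (hv : e.1 = v ∨ e.2 = v) :
    ∃ e' ∈ fractionalEdges E x, e' ≠ e ∧ (e'.1 = v ∨ e'.2 = v) := by
  let Z := (Int.castAddHom ℝ).range
  obtain ⟨heE, hxe⟩ := mem_filter.1 he
  by_contra! hsingle
  have hint : x e ∈ Z := by
    refine mem_of_netFlow_mem (mem_E0_iff.1 (hE heE)) hv ⟨d v, (hx.2.2 v).symm⟩
      fun a hae hav => ?_
    by_cases haE : a ∈ E
    · have hfrac : x a ∉ Set.Ioo 0 1 := fun h => by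
        have := hsingle a (mem_filter.2 ⟨haE, h⟩) hae
        tauto
      rcases eq_zero_or_eq_one_of_mem_Icc (hx.2.1 a haE) hfrac with h | h
      exacts [⟨0, by simp [h]⟩, ⟨1, by simp [h]⟩]
    · exact ⟨0, by simp [hx.1 a haE]⟩
  obtain ⟨k, hk⟩ := hint
  simp only [Int.coe_castAddHom] at hk
  obtain ⟨h0, h1⟩ := hxe
  rw [← hk] at h0 h1
  norm_cast at h0 h1
  omega

lemma exists_fewer_fractionalEdges (hE : E ⊆ E0 n) (hx : memFlowPolytope n E d x)
    (hfrac : (fractionalEdges E x).Nonempty) :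
    ∃ x', memFlowPolytope n E d x' ∧ #(fractionalEdges E x') < #(fractionalEdges E x) := by
  set F := fractionalEdges E x
  have hFE : F ⊆ E := filter_subset _ _
  obtain ⟨g, hgF, hgflow, hg⟩ := exists_circulation_supportedOn F hfrac
    fun e he v hv => exists_ne_mem_fractionalEdges hE hx he hv
  obtain ⟨t, ht, b, hbE, hgb, hxb⟩ := exists_add_mul_mem_Icc_boundary E x g hx.2.1
    (hg.imp fun a ha => ⟨hFE ha.1, ha.2⟩)
  have hgE : ∀ a ∉ E, g a = 0 := fun a ha => hgF a fun h => ha (hFE h)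
  refine ⟨x + t • g, ⟨fun a ha => by simp [hx.1 a ha, hgE a ha], fun a ha => ht a ha,
    fun v => ?_⟩, card_lt_card ⟨fun a ha => ?_, fun hsub => ?_⟩⟩
  · change netFlow n (x + t • g) v = d v
    rw [map_add, map_smul, hgflow, smul_zero, add_zero]
    exact hx.2.2 v
  · obtain ⟨haE, hxa⟩ := mem_filter.1 ha
    by_contra haF
    simp only [Pi.add_apply, Pi.smul_apply, smul_eq_mul, hgF a haF, mul_zero, add_zero] at hxa
    exact haF (mem_filter.2 ⟨haE, hxa⟩)
  · have hbF : b ∈ F := by_contra fun h => hgb (hgF b h)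
    have := (mem_filter.1 (hsub hbF)).2
    simp only [Pi.add_apply, Pi.smul_apply, smul_eq_mul] at this
    rcases hxb with h | h <;> simp [h] at this

lemma exists_isVertex (hE : E ⊆ E0 n) (hx : memFlowPolytope n E d x) :
    ∃ f, IsVertex n E d f := by
  induction hk : #(fractionalEdges E x) using Nat.strong_induction_on generalizing x with
  | _ k ih =>
  rcases (fractionalEdges E x).eq_empty_or_nonempty with hempty | hfrac
  · exact ⟨x, hx, fun e he => eq_zero_or_eq_one_of_mem_Icc (hx.2.1 e he) fun h =>
      eq_empty_iff_forall_notMem.1 hempty e (mem_filter.2 ⟨he, h⟩)⟩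
  · obtain ⟨x', hx', hlt⟩ := exists_fewer_fractionalEdges hE hx hfrac
    exact ih _ (hk ▸ hlt) hx' rfl

end Polytope

section Flip

variable (f : Fin n × Fin n → ℝ)

lemma mem_flipSet_iff {T : Finset (Fin n × Fin n)} {e : Fin n × Fin n} :
    e ∈ flipSet n f T ↔ (e ∈ T ∧ f e ≠ 1) ∨ (rev e ∈ T ∧ f (rev e) = 1) := by
  simp only [flipSet, flipEdge, mem_image]
  constructor
  · rintro ⟨a, ha, rfl⟩
    split_ifs with h
    exacts [.inr ⟨ha, h⟩, .inl ⟨ha, h⟩]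
  · rintro (⟨he, h⟩ | ⟨he, h⟩)
    exacts [⟨e, he, if_neg h⟩, ⟨rev e, he, by rw [if_pos h]; rfl⟩]

lemma flipSet_subset_E0 {T : Finset (Fin n × Fin n)} (hT : T ⊆ E0 n) : flipSet n f T ⊆ E0 n := by
  intro e he
  rcases (mem_flipSet_iff f).1 he with ⟨he, -⟩ | ⟨he, -⟩
  · exact hT he
  · exact mem_E0_iff.2 (mem_E0_iff.1 (hT he)).symm

lemma undirGraph_flipSet (T : Finset (Fin n × Fin n)) :
    undirGraph n (flipSet n f T) = undirGraph n T := by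
  ext u v
  simp only [undirGraph, mem_flipSet_iff, rev]
  tauto

lemma IsDirTree.of_flipSet {T : Finset (Fin n × Fin n)} (hT : T ⊆ E0 n)
    (hinj : Set.InjOn (flipEdge n f) T) (h : IsDirTree n (flipSet n f T)) : IsDirTree n T :=
  ⟨hT, by rw [← h.2.1, flipSet, card_image_of_injOn hinj], undirGraph_flipSet f T ▸ h.2.2⟩

lemma exists_isDirTree_flipSet_eq {E A : Finset (Fin n × Fin n)} (hE : E ⊆ E0 n)
    (hA : A ⊆ flipSet n f E) (hAtree : IsDirTree n A) :
    ∃ T ⊆ E, IsDirTree n T ∧ flipSet n f T = A := by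
  obtain ⟨T, hTE, hinj, rfl⟩ := exists_subset_injOn_image_eq_of_surjOn (f := flipEdge n f) E A
    fun a ha => by
      obtain ⟨e, he, rfl⟩ := mem_image.1 (hA ha)
      exact ⟨e, he, rfl⟩
  exact ⟨T, coe_subset.1 hTE, hAtree.of_flipSet f (fun a ha => hE (coe_subset.1 hTE ha)) hinj, rfl⟩

end Flip

section Reach

variable {D : Finset (Fin n × Fin n)}

lemma reachesIn_swap_of_netFlow_eq_zero {y : Fin n × Fin n → ℝ} (hy : ∀ a, 0 ≤ y a)
    (hcirc : netFlow n y = 0) {a b : Fin n} (hab : 0 < y (a, b)) :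
    reachesIn n (univ.filter (0 < y ·)) b a := by
  set R := univ.filter (reachesIn n (univ.filter (0 < y ·)) · a)
  have hpred : ∀ i u, 0 < y (i, u) → u ∈ R → i ∈ R := fun i u hiu hu =>
    mem_filter.2 ⟨mem_univ _, .head (mem_filter.2 ⟨mem_univ _, hiu⟩) (mem_filter.1 hu).2⟩
  have hin : ∑ u ∈ R, ∑ i ∈ Rᶜ, y (i, u) = 0 :=
    sum_eq_zero fun u hu => sum_eq_zero fun i hi =>
      ((hy _).eq_of_not_lt fun h => mem_compl.1 hi (hpred i u h hu)).symm
  -- no flow enters the set `R` of vertices reaching `a`, so none leaves it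
  have hout : ∑ u ∈ R, ∑ i ∈ Rᶜ, y (u, i) = 0 := by
    have := sum_netFlow_eq_cut y R
    simp only [hcirc, Pi.zero_apply, sum_const_zero, hin] at this
    linarith
  have haR : a ∈ R := mem_filter.2 ⟨mem_univ _, .refl⟩
  by_contra hb
  have hbR : b ∈ Rᶜ := mem_compl.2 fun h => hb (mem_filter.1 h).2
  have := (sum_eq_zero_iff_of_nonneg fun i _ => hy (a, i)).1
    ((sum_eq_zero_iff_of_nonneg fun u _ => sum_nonneg fun i _ => hy (u, i)).1 hout a haR) b hbR
  exact hab.ne' this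

lemma reachesIn_of_connected (hconn : (undirGraph n D).Connected)
    (hswap : ∀ a b, (a, b) ∈ D → reachesIn n D b a) (u v : Fin n) : reachesIn n D u v := by
  have hadj : ∀ a b, (undirGraph n D).Adj a b → reachesIn n D a b :=
    fun a b hab => hab.2.elim (fun h => Relation.ReflTransGen.single h) (hswap b a)
  exact Relation.reflTransGen_closed hadj u v
    ((SimpleGraph.reachable_iff_reflTransGen u v).1 (hconn.preconnected u v))

lemma reachesIn.reachable (hD : D ⊆ E0 n) {u v : Fin n} (h : reachesIn n D u v) :
    (undirGraph n D).Reachable u v :=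
  (SimpleGraph.reachable_iff_reflTransGen u v).2 <|
    Relation.ReflTransGen.mono (fun _ _ hab => ⟨mem_E0_iff.1 (hD hab), .inl hab⟩) u v h

lemma exists_crossing_edge {S : Finset (Fin n)} {u r : Fin n} (h : reachesIn n D u r)
    (hu : u ∉ S) (hr : r ∈ S) : ∃ a ∉ S, ∃ b ∈ S, (a, b) ∈ D := by
  induction h using Relation.ReflTransGen.head_induction_on with
  | refl => exact absurd hr hu
  | @head a c hac _ ih =>
    by_cases hc : c ∈ S
    · exact ⟨a, hu, c, hc, hac⟩
    · exact ih hc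

lemma isArb_of_reachesIn {A : Finset (Fin n × Fin n)} {r : Fin n} (hA : A ⊆ E0 n)
    (hcard : #A = n - 1) (hreach : ∀ v, reachesIn n A v r) : IsArb n r A :=
  ⟨⟨hA, hcard, @SimpleGraph.Connected.mk _ _
    (fun u v => ((hreach u).reachable hA).trans ((hreach v).reachable hA).symm) ⟨r⟩⟩, hreach⟩

lemma exists_isArb_subset (hD : D ⊆ E0 n) (r : Fin n) (hreach : ∀ v, reachesIn n D v r) :
    ∃ A ⊆ D, IsArb n r A := by
  -- grow a tree `A` on a vertex set `S ∋ r` by edges of `D` entering `S`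
  suffices h : ∀ k (S : Finset (Fin n)) (A : Finset (Fin n × Fin n)), #Sᶜ = k → r ∈ S → A ⊆ D →
      #A + 1 = #S → (∀ a ∈ A, a.1 ∈ S) → (∀ v ∈ S, reachesIn n A v r) → ∃ A ⊆ D, IsArb n r A from
    h _ {r} ∅ rfl (mem_singleton_self r) (empty_subset _) rfl (by simp)
      fun v hv => mem_singleton.1 hv ▸ .refl
  intro k
  induction k with
  | zero =>
    intro S A hk _ hAD hcard _ hAreach
    have hS : S = univ := by simpa using hk
    subst hS
    refine ⟨A, hAD, isArb_of_reachesIn (hAD.trans hD) ?_ fun v => hAreach v (mem_univ v)⟩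
    simp only [card_univ, Fintype.card_fin] at hcard
    omega
  | succ k ih =>
    intro S A hk hr hAD hcard hAS hAreach
    obtain ⟨u, hu⟩ := card_pos.1 (by omega : 0 < #Sᶜ)
    obtain ⟨a, ha, b, hb, habD⟩ := exists_crossing_edge (hreach u) (mem_compl.1 hu) hr
    have hnew : (a, b) ∉ A := fun h => ha (hAS _ h)
    refine ih (insert a S) (insert (a, b) A) ?_ (mem_insert_of_mem hr) (insert_subset habD hAD)
      (by rw [card_insert_of_notMem hnew, card_insert_of_notMem ha, hcard]) ?_ ?_
    · rw [compl_insert, card_erase_of_mem (mem_compl.2 ha), hk, Nat.add_sub_cancel]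
    · simpa using fun x y h => mem_insert_of_mem (hAS _ h)
    · have hmono : ∀ v, reachesIn n A v r → reachesIn n (insert (a, b) A) v r :=
        fun v => Relation.ReflTransGen.mono (fun _ _ => mem_insert_of_mem) v r
      simp only [mem_insert, forall_eq_or_imp]
      exact ⟨.head (mem_insert_self _ _) (hmono b (hAreach b hb)),
        fun v hv => hmono v (hAreach v hv)⟩

end Reach

section Mf

variable {E : Finset (Fin n × Fin n)} {d : Fin n → ℤ} {f x : Fin n × Fin n → ℝ}

lemma netFlow_Mf : netFlow n (Mf n f x) = netFlow n x - netFlow n f := by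
  have : Mf n f x = x - x * f + (f - x * f) ∘ rev := by
    ext e
    simp only [Mf, Pi.add_apply, Pi.sub_apply, Pi.mul_apply, Function.comp_apply]
    ring
  rw [this, map_add, netFlow_comp_rev, map_sub, map_sub]
  abel

lemma IsVertex.eq_zero_or_eq_one (hf : IsVertex n E d f) (e : Fin n × Fin n) :
    f e = 0 ∨ f e = 1 :=
  if he : e ∈ E then hf.2 e he else .inl (hf.1.1 e he)

lemma memFlowPolytope.mem_Icc (hx : memFlowPolytope n E d x) (e : Fin n × Fin n) :
    x e ∈ Set.Icc 0 1 :=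
  if he : e ∈ E then hx.2.1 e he else by simp [hx.1 e he]

lemma IsVertex.mem_Icc (hf : IsVertex n E d f) (e : Fin n × Fin n) : f e ∈ Set.Icc 0 1 := by
  rcases hf.eq_zero_or_eq_one e with h | h <;> simp [h]

lemma Mf_nonneg (hf : IsVertex n E d f) (hx : memFlowPolytope n E d x) (e : Fin n × Fin n) :
    0 ≤ Mf n f x e :=
  add_nonneg (mul_nonneg (hx.mem_Icc e).1 (sub_nonneg.2 (hf.mem_Icc e).2))
    (mul_nonneg (sub_nonneg.2 (hx.mem_Icc _).2) (hf.mem_Icc _).1)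

lemma Mf_pos_iff (hf : IsVertex n E d f) (hx : memFlowPolytope n E d x)
    (hxE : ∀ e ∈ E, x e ∈ Set.Ioo 0 1) (e : Fin n × Fin n) :
    0 < Mf n f x e ↔ e ∈ flipSet n f E := by
  have ht₁ : 0 < x e * (1 - f e) ↔ e ∈ E ∧ f e ≠ 1 := by
    by_cases he : e ∈ E
    · rcases hf.eq_zero_or_eq_one e with h | h <;> simp [he, h, (hxE e he).1]
    · simp [he, hx.1 e he]
  have ht₂ : 0 < (1 - x (rev e)) * f (rev e) ↔ rev e ∈ E ∧ f (rev e) = 1 := by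
    by_cases hr : rev e ∈ E
    · rcases hf.eq_zero_or_eq_one (rev e) with h | h <;> simp [hr, h, (hxE _ hr).2]
    · simp [hr, hf.1.1 _ hr]
  have h₁ := mul_nonneg (hx.mem_Icc e).1 (sub_nonneg.2 (hf.mem_Icc e).2)
  have h₂ := mul_nonneg (sub_nonneg.2 (hx.mem_Icc (rev e)).2) (hf.mem_Icc (rev e)).1
  rw [mem_flipSet_iff, Mf, ← ht₁, ← ht₂]
  constructor
  · intro h
    by_contra! hle
    linarith [hle.1, hle.2]
  · rintro (h | h) <;> linarith

lemma reachesIn_flipSet (hconn : (undirGraph n E).Connected) (hf : IsVertex n E d f)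
    (hx : memFlowPolytope n E d x) (hxE : ∀ e ∈ E, x e ∈ Set.Ioo 0 1) (u v : Fin n) :
    reachesIn n (flipSet n f E) u v := by
  have hsupp : univ.filter (0 < Mf n f x ·) = flipSet n f E := by
    ext e
    simp [Mf_pos_iff hf hx hxE]
  have hcirc : netFlow n (Mf n f x) = 0 := by
    rw [netFlow_Mf]
    ext v
    exact sub_eq_zero.2 ((hx.2.2 v).trans (hf.1.2.2 v).symm)
  refine reachesIn_of_connected (by rwa [undirGraph_flipSet]) (fun a b hab => ?_) u v
  rw [← hsupp]
  exact reachesIn_swap_of_netFlow_eq_zero (Mf_nonneg hf hx) hcirc ((Mf_pos_iff hf hx hxE _).2 hab)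

end Mf

end

theorem exists_flow_and_tree_general (n : ℕ)
    (E : Finset (Fin n × Fin n)) (hE : E ⊆ E0 n) (d : Fin n → ℤ)
    (hconn : (undirGraph n E).Connected)
    (hne : ∃ x, memFlowPolytope n E d x ∧ ∀ e ∈ E, x e ∈ Set.Ioo (0 : ℝ) 1) :
    ∃ f : Fin n × Fin n → ℝ, IsVertex n E d f ∧
      ∃ T : Finset (Fin n × Fin n), IsDirTree n T ∧ T ⊆ E ∧
        ∃ r : Fin n, IsArb n r (flipSet n f T) := by
  obtain ⟨x, hx, hxE⟩ := hne
  obtain ⟨f, hf⟩ := exists_isVertex hE hx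
  obtain ⟨r⟩ := hconn.nonempty
  obtain ⟨A, hAD, hA⟩ := exists_isArb_subset (flipSet_subset_E0 f hE) r
    fun v => reachesIn_flipSet hconn hf hx hxE v r
  obtain ⟨T, hTE, hT, rfl⟩ := exists_isDirTree_flipSet_eq f hE hAD hA.1
  exact ⟨f, hf, T, hT, hTE, r, hA⟩

/-- existence of a vertex `f` and a directed tree `T` in `E` such
that `Flip_f(T)` is an arborescence (rooted at some node). -/
theorem exists_flow_and_tree (n : ℕ) (hn : 2 ≤ n)
    (E : Finset (Fin n × Fin n)) (hE : E ⊆ E0 n) (d : Fin n → ℤ)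
    (hconn : (undirGraph n E).Connected)
    (hne : ∃ x, memFlowPolytope n E d x ∧ ∀ e ∈ E, x e ∈ Set.Ioo (0 : ℝ) 1) :
    ∃ f : Fin n × Fin n → ℝ, IsVertex n E d f ∧
      ∃ T : Finset (Fin n × Fin n), IsDirTree n T ∧ T ⊆ E ∧
        ∃ r : Fin n, IsArb n r (flipSet n f T) :=
  exists_flow_and_tree_general n E hE d hconn hne
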